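/- arXiv:1106.4211 — 5 statements merged into one kernel-verified Lean document; each statement's English description precedes it below -/
import Mathlib

section
/- Suppose condition (INJ) holds and there exist constants C₁, C₂ > 0 such that C₁‖y‖_Y ≤ ‖y‖_opt ≤ C₂‖y‖_Y for all y ∈ Y. Then the energy norm of every trial function is equivalent to its X-norm with the same constants: C₁‖x‖_X ≤ ‖T x‖_Y ≤ C₂‖x‖_X for all x ∈ X. -/
/-!
Write `b x y = ⟪x, T† y⟫`. By Cauchy–Schwarz, with equality at `x = T† y`, the optimal test
norm is `‖T† y‖`, so the hypothesis says that `T†` is bounded above by `C₂` and below by `C₁`.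
The upper bound passes to `T` since `‖T‖ = ‖T†‖`. For the lower bound, `T†` has closed range
(it is bounded below) whose orthogonal complement is `ker T = 0` (condition (INJ)), so `T†` is
onto; writing `x = T† y` gives `‖x‖² = ⟪T x, y⟫ ≤ ‖T x‖ ‖y‖ ≤ ‖T x‖ ‖x‖ / C₁`.
-/

open scoped RealInnerProductSpace InnerProduct InnerProductSpace

/-- The optimal test norm `‖y‖_opt = sup_{x ≠ 0} b(x,y)/‖x‖`. -/
noncomputable def optTestNorm {X Y : Type*} [NormedAddCommGroup X] [NormedSpace ℝ X]
    [NormedAddCommGroup Y] [NormedSpace ℝ Y]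
    (b : X →L[ℝ] Y →L[ℝ] ℝ) (y : Y) : ℝ :=
  ⨆ x : {x : X // x ≠ 0}, b x.1 y / ‖x.1‖

theorem iSup_inner_div_norm_eq_norm {E : Type*} [NormedAddCommGroup E] [InnerProductSpace ℝ E]
    (v : E) : ⨆ x : {x : E // x ≠ 0}, ⟪x.1, v⟫ / ‖x.1‖ = ‖v‖ := by
  have hle : ∀ x : {x : E // x ≠ 0}, ⟪x.1, v⟫ / ‖x.1‖ ≤ ‖v‖ := fun x =>
    div_le_of_le_mul₀ (norm_nonneg _) (norm_nonneg _)
      ((real_inner_le_norm _ _).trans_eq (mul_comm _ _))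
  refine le_antisymm (Real.iSup_le hle (norm_nonneg v)) ?_
  rcases eq_or_ne v 0 with rfl | hv
  · simp
  · refine le_ciSup_of_le ⟨‖v‖, Set.forall_mem_range.mpr hle⟩ ⟨v, hv⟩ ?_
    rw [real_inner_self_eq_norm_sq, sq, mul_div_cancel_right₀ _ (norm_ne_zero_iff.mpr hv)]

theorem optTestNorm_eq_norm_adjoint {X Y : Type*}
    [NormedAddCommGroup X] [InnerProductSpace ℝ X] [CompleteSpace X]
    [NormedAddCommGroup Y] [InnerProductSpace ℝ Y] [CompleteSpace Y]
    (b : X →L[ℝ] Y →L[ℝ] ℝ) (T : X →L[ℝ] Y) (hT : ∀ (x : X) (y : Y), ⟪T x, y⟫ = b x y)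
    (y : Y) : optTestNorm b y = ‖(T†) y‖ := by
  simp only [optTestNorm, ← hT, ← ContinuousLinearMap.adjoint_inner_right]
  exact iSup_inner_div_norm_eq_norm _

namespace ContinuousLinearMap

variable {𝕜 E F : Type*} [RCLike 𝕜]
  [NormedAddCommGroup E] [InnerProductSpace 𝕜 E] [CompleteSpace E]
  [NormedAddCommGroup F] [InnerProductSpace 𝕜 F] [CompleteSpace F]

theorem norm_apply_le_of_norm_adjoint_apply_le (A : E →L[𝕜] F) {C : ℝ} (hC : 0 ≤ C)
    (h : ∀ y, ‖(A†) y‖ ≤ C * ‖y‖) (x : E) : ‖A x‖ ≤ C * ‖x‖ := by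
  refine A.le_of_opNorm_le ?_ x
  rw [← adjoint.norm_map A]
  exact opNorm_le_bound _ hC h

theorem surjective_adjoint_of_injective_of_antilipschitz (A : E →L[𝕜] F) (hA : A.ker = ⊥)
    {c : NNReal} (hc : AntilipschitzWith c (A†)) : Function.Surjective (A†) := by
  refine ((bijective_iff_dense_range_and_antilipschitz (A†)).mpr ⟨?_, c, hc⟩).2
  rw [Submodule.topologicalClosure_eq_top_iff, orthogonal_range, adjoint_adjoint, hA]

theorem mul_norm_le_norm_apply_of_mul_norm_le_norm_adjoint_apply (A : E →L[𝕜] F)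
    (hA : A.ker = ⊥) {C : ℝ} (hC : 0 < C) (h : ∀ y, C * ‖y‖ ≤ ‖(A†) y‖) (x : E) :
    C * ‖x‖ ≤ ‖A x‖ := by
  have hanti : AntilipschitzWith (Real.toNNReal C⁻¹) (A†) := by
    refine (A†).antilipschitz_of_bound fun y => ?_
    rw [Real.coe_toNNReal _ (inv_nonneg.mpr hC.le), inv_mul_eq_div, le_div_iff₀ hC, mul_comm]
    exact h y
  obtain ⟨y, rfl⟩ := A.surjective_adjoint_of_injective_of_antilipschitz hA hanti x
  rcases eq_or_ne ((A†) y) 0 with hy | hy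
  · simp [hy]
  have hsq : ‖(A†) y‖ ^ 2 ≤ ‖A ((A†) y)‖ * ‖y‖ := by
    calc ‖(A†) y‖ ^ 2
      _ = ‖⟪(A†) y, (A†) y⟫_𝕜‖ := by
        rw [inner_self_eq_norm_sq_to_K, norm_pow, RCLike.norm_ofReal, abs_norm]
      _ = ‖⟪A ((A†) y), y⟫_𝕜‖ := by rw [adjoint_inner_right]
      _ ≤ ‖A ((A†) y)‖ * ‖y‖ := norm_inner_le_norm _ _
  refine le_of_mul_le_mul_right ?_ (norm_pos_iff.mpr hy)
  calc C * ‖(A†) y‖ * ‖(A†) y‖ = C * ‖(A†) y‖ ^ 2 := by ring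
    _ ≤ C * (‖A ((A†) y)‖ * ‖y‖) := by gcongr
    _ = ‖A ((A†) y)‖ * (C * ‖y‖) := by ring
    _ ≤ ‖A ((A†) y)‖ * ‖(A†) y‖ := by gcongr; exact h y

end ContinuousLinearMap

/-- Equivalence of the energy norm `‖T x‖_Y` with the norm of `X`,
with the same constants as in the test norm equivalence. -/
theorem dpg_energy_norm_equivalence {X Y : Type*}
    [NormedAddCommGroup X] [InnerProductSpace ℝ X] [CompleteSpace X]
    [NormedAddCommGroup Y] [InnerProductSpace ℝ Y] [CompleteSpace Y]
    (b : X →L[ℝ] Y →L[ℝ] ℝ) (T : X →L[ℝ] Y)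
    (hT : ∀ (x : X) (y : Y), ⟪T x, y⟫ = b x y)
    (hinj : ∀ w : X, (∀ y : Y, b w y = 0) → w = 0)
    (C₁ C₂ : ℝ) (hC₁ : 0 < C₁) (hC₂ : 0 < C₂)
    (hlow : ∀ y : Y, C₁ * ‖y‖ ≤ optTestNorm b y)
    (hup : ∀ y : Y, optTestNorm b y ≤ C₂ * ‖y‖) :
    ∀ x : X, C₁ * ‖x‖ ≤ ‖T x‖ ∧ ‖T x‖ ≤ C₂ * ‖x‖ := by
  have hopt := optTestNorm_eq_norm_adjoint b T hT
  have hker : T.ker = ⊥ := LinearMap.ker_eq_bot'.mpr fun w hw =>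
    hinj w fun y => by rw [← hT, show T w = 0 from hw, inner_zero_left]
  intro x
  exact ⟨T.mul_norm_le_norm_apply_of_mul_norm_le_norm_adjoint_apply hker hC₁
      (fun y => hopt y ▸ hlow y) x,
    T.norm_apply_le_of_norm_adjoint_apply_le hC₂.le (fun y => hopt y ▸ hup y) x⟩
end

section
/- Let X_h be a finite-dimensional subspace of X, let l be a continuous linear functional on Y, and let τ_l ∈ Y be its Riesz representative, i.e., ⟪τ_l, y⟫_Y = l(y) for all y ∈ Y. Then x_h ∈ X_h satisfies the DPG equations b(x_h, y) = l(y) for all y ∈ T(X_h) if and only if x_h is a least-squares minimizer, i.e., ‖τ_l − T x_h‖_Y ≤ ‖τ_l − T z‖_Y for all z ∈ X_h. -/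
/-!
Since `⟪τl - T xh, T z⟫ = l (T z) - b xh (T z)`, the DPG equations say exactly that the residual
`τl - T xh` is orthogonal to the subspace `T(Xh)`, and orthogonality of the residual characterizes
best approximation from a subspace of an inner product space.
-/

open scoped RealInnerProductSpace

theorem Submodule.forall_norm_sub_le_iff_forall_inner_eq_zero {F : Type*}
    [NormedAddCommGroup F] [InnerProductSpace ℝ F] (K : Submodule ℝ F) {u v : F} (hv : v ∈ K) :
    (∀ w ∈ K, ‖u - v‖ ≤ ‖u - w‖) ↔ ∀ w ∈ K, ⟪u - v, w⟫ = 0 := by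
  have hbdd : BddBelow (Set.range fun w : (K : Set F) ↦ ‖u - w‖) :=
    ⟨0, by rintro _ ⟨w, rfl⟩; exact norm_nonneg _⟩
  rw [← K.norm_eq_iInf_iff_real_inner_eq_zero hv]
  refine ⟨fun h ↦ le_antisymm (le_ciInf fun w ↦ h w w.2) (ciInf_le hbdd ⟨v, hv⟩), ?_⟩
  intro h w hw
  exact h ▸ ciInf_le hbdd ⟨w, hw⟩

theorem forall_norm_sub_apply_le_iff_forall_inner_eq_zero {X Y G : Type*}
    [AddCommGroup X] [Module ℝ X] [NormedAddCommGroup Y] [InnerProductSpace ℝ Y]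
    [FunLike G X Y] [LinearMapClass G ℝ X Y] (T : G) (V : Submodule ℝ X) (u : Y) {x : X}
    (hx : x ∈ V) :
    (∀ z ∈ V, ‖u - T x‖ ≤ ‖u - T z‖) ↔ ∀ z ∈ V, ⟪u - T x, T z⟫ = 0 := by
  have hTx : T x ∈ V.map (T : X →ₗ[ℝ] Y) := Submodule.mem_map_of_mem hx
  simpa only [Submodule.mem_map, LinearMap.coe_coe, forall_exists_index, and_imp,
    forall_apply_eq_imp_iff₂] using
    (V.map (T : X →ₗ[ℝ] Y)).forall_norm_sub_le_iff_forall_inner_eq_zero (u := u) hTx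

theorem dpg_least_squares_general {X Y : Type*}
    [NormedAddCommGroup X] [InnerProductSpace ℝ X]
    [NormedAddCommGroup Y] [InnerProductSpace ℝ Y]
    (b : X →L[ℝ] Y →L[ℝ] ℝ) (T : X →L[ℝ] Y)
    (hT : ∀ (x : X) (y : Y), ⟪T x, y⟫ = b x y)
    (Xh : Submodule ℝ X)
    (l : Y →L[ℝ] ℝ) (τl : Y) (hτl : ∀ y : Y, ⟪τl, y⟫ = l y)
    (xh : X) (hxh : xh ∈ Xh) :
    (∀ z ∈ Xh, b xh (T z) = l (T z)) ↔
      (∀ z ∈ Xh, ‖τl - T xh‖ ≤ ‖τl - T z‖) := by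
  rw [forall_norm_sub_apply_le_iff_forall_inner_eq_zero T Xh τl hxh]
  refine forall₂_congr fun z _ ↦ ?_
  rw [inner_sub_left, hτl, hT, sub_eq_zero, eq_comm]

/-- The DPG method is a least-squares method in a nonstandard inner product. -/
theorem dpg_least_squares {X Y : Type*}
    [NormedAddCommGroup X] [InnerProductSpace ℝ X] [CompleteSpace X]
    [NormedAddCommGroup Y] [InnerProductSpace ℝ Y] [CompleteSpace Y]
    (b : X →L[ℝ] Y →L[ℝ] ℝ) (T : X →L[ℝ] Y)
    (hT : ∀ (x : X) (y : Y), ⟪T x, y⟫ = b x y)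
    (Xh : Submodule ℝ X) (hfin : FiniteDimensional ℝ Xh)
    (l : Y →L[ℝ] ℝ) (τl : Y) (hτl : ∀ y : Y, ⟪τl, y⟫ = l y)
    (xh : X) (hxh : xh ∈ Xh) :
    (∀ z ∈ Xh, b xh (T z) = l (T z)) ↔
      (∀ z ∈ Xh, ‖τl - T xh‖ ≤ ‖τl - T z‖) :=
  dpg_least_squares_general b T hT Xh l τl hτl xh hxh
end

section
/- Let X_h be a subspace of X and l a continuous linear functional on Y. Suppose x ∈ X satisfies b(x, y) = l(y) for all y ∈ Y, and x_h ∈ X_h satisfies b(x_h, y) = l(y) for all y ∈ T(X_h). Then the Galerkin orthogonality ⟪T(x − x_h), T z⟫_Y = 0 holds for all z ∈ X_h, and consequently the DPG solution is the best approximation in the energy norm: ‖T(x − x_h)‖_Y ≤ ‖T(x − z)‖_Y for all z ∈ X_h. -/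
/-!
Since `T` is the Riesz representative of `b`, the residual `b (x - xh) y` equals
`⟪T (x - xh), y⟫`, and it vanishes on the discrete test space `T(Xh)`. So `T xh` is the
orthogonal projection of `T x` onto `T(Xh)`, and Pythagoras gives the best approximation.
-/

open scoped RealInnerProductSpace

theorem norm_le_norm_add_of_inner_eq_zero {F : Type*} [NormedAddCommGroup F]
    [InnerProductSpace ℝ F] {u w : F} (h : ⟪u, w⟫ = 0) : ‖u‖ ≤ ‖u + w‖ := by
  rw [mul_self_le_mul_self_iff (norm_nonneg _) (norm_nonneg _),
    norm_add_sq_eq_norm_sq_add_norm_sq_real h]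
  exact le_add_of_nonneg_right (mul_self_nonneg _)

theorem inner_map_sub_eq_zero_of_apply_eq {X Y : Type*}
    [NormedAddCommGroup X] [NormedSpace ℝ X] [NormedAddCommGroup Y] [InnerProductSpace ℝ Y]
    {b : X →L[ℝ] Y →L[ℝ] ℝ} {T : X →L[ℝ] Y} (hT : ∀ (x : X) (y : Y), ⟪T x, y⟫ = b x y)
    {l : Y →L[ℝ] ℝ} {x xh : X} {y : Y} (hx : b x y = l y) (hxh : b xh y = l y) :
    ⟪T (x - xh), y⟫ = 0 := by
  rw [hT, map_sub, sub_apply, hx, hxh, sub_self]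

theorem dpg_galerkin_orthogonality_general {X Y : Type*}
    [NormedAddCommGroup X] [InnerProductSpace ℝ X]
    [NormedAddCommGroup Y] [InnerProductSpace ℝ Y]
    (b : X →L[ℝ] Y →L[ℝ] ℝ) (T : X →L[ℝ] Y)
    (hT : ∀ (x : X) (y : Y), ⟪T x, y⟫ = b x y)
    (Xh : Submodule ℝ X) (l : Y →L[ℝ] ℝ)
    (x : X) (hx : ∀ y : Y, b x y = l y)
    (xh : X) (hxh : xh ∈ Xh)
    (hxhsol : ∀ z ∈ Xh, b xh (T z) = l (T z)) :
    (∀ z ∈ Xh, ⟪T (x - xh), T z⟫ = 0) ∧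
      (∀ z ∈ Xh, ‖T (x - xh)‖ ≤ ‖T (x - z)‖) := by
  have horth : ∀ z ∈ Xh, ⟪T (x - xh), T z⟫ = 0 := fun z hz =>
    inner_map_sub_eq_zero_of_apply_eq hT (hx _) (hxhsol z hz)
  refine ⟨horth, fun z hz => ?_⟩
  have hsplit : x - z = (x - xh) + (xh - z) := by abel
  rw [hsplit, map_add]
  exact norm_le_norm_add_of_inner_eq_zero (horth _ (Xh.sub_mem hxh hz))

/-- Galerkin orthogonality in the test space inner product, and best approximation
in the energy norm, for the DPG method. -/
theorem dpg_galerkin_orthogonality {X Y : Type*}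
    [NormedAddCommGroup X] [InnerProductSpace ℝ X] [CompleteSpace X]
    [NormedAddCommGroup Y] [InnerProductSpace ℝ Y] [CompleteSpace Y]
    (b : X →L[ℝ] Y →L[ℝ] ℝ) (T : X →L[ℝ] Y)
    (hT : ∀ (x : X) (y : Y), ⟪T x, y⟫ = b x y)
    (Xh : Submodule ℝ X) (l : Y →L[ℝ] ℝ)
    (x : X) (hx : ∀ y : Y, b x y = l y)
    (xh : X) (hxh : xh ∈ Xh)
    (hxhsol : ∀ z ∈ Xh, b xh (T z) = l (T z)) :
    (∀ z ∈ Xh, ⟪T (x - xh), T z⟫ = 0) ∧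
      (∀ z ∈ Xh, ‖T (x - xh)‖ ≤ ‖T (x - z)‖) :=
  dpg_galerkin_orthogonality_general b T hT Xh l x hx xh hxh hxhsol
end

section
/- Suppose condition (INJ) holds and there exists a constant C₁ > 0 such that C₁‖y‖_Y ≤ ‖y‖_opt for all y ∈ Y. Then for every continuous linear functional l on Y there exists a unique x ∈ X such that b(x, y) = l(y) for all y ∈ Y. -/
open scoped RealInnerProductSpace

/-!
Let `A : Y → X` be the Riesz representation of `y ↦ b(·, y)`, so that `⟪A y, x⟫ = b(x, y)` and
`‖A y‖ = ‖b(·, y)‖_{X'} ≥ ‖y‖_opt ≥ C₁ ‖y‖`. Being bounded below, `A` is injective with closed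
range, and the orthogonal complement of its range is exactly the set of `w` with `b(w, ·) = 0`,
which is trivial by (INJ). Hence `A` is an isomorphism, and `x := Riesz(l ∘ A⁻¹)` solves
`b(x, y) = ⟪A y, x⟫ = l(A⁻¹ A y) = l(y)`. Uniqueness is (INJ) applied to a difference of solutions.
-/

theorem optTestNorm_le_norm_flip {X Y : Type*} [NormedAddCommGroup X] [NormedSpace ℝ X]
    [NormedAddCommGroup Y] [NormedSpace ℝ Y] (b : X →L[ℝ] Y →L[ℝ] ℝ) (y : Y) :
    optTestNorm b y ≤ ‖b.flip y‖ := by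
  refine Real.iSup_le (fun x => ?_) (norm_nonneg _)
  rw [div_le_iff₀ (norm_pos_iff.mpr x.2)]
  calc b x.1 y ≤ ‖b.flip y x.1‖ := le_abs_self _
    _ ≤ ‖b.flip y‖ * ‖x.1‖ := (b.flip y).le_opNorm x.1

namespace ContinuousLinearMap

variable {𝕜 E F : Type*} [RCLike 𝕜] [NormedAddCommGroup E] [InnerProductSpace 𝕜 E]
  [CompleteSpace E] [NormedAddCommGroup F] [NormedSpace 𝕜 F] [CompleteSpace F]

theorem bijective_of_bounded_below_of_orthogonal_range_eq_bot (A : F →L[𝕜] E) {C : ℝ}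
    (hC : 0 < C) (hA : ∀ y, C * ‖y‖ ≤ ‖A y‖) (hrange : A.rangeᗮ = ⊥) :
    Function.Bijective A := by
  have hanti : AntilipschitzWith (Real.toNNReal C⁻¹) A := by
    refine A.antilipschitz_of_bound fun y => ?_
    rw [Real.coe_toNNReal _ (inv_nonneg.mpr hC.le), inv_mul_eq_div, le_div_iff₀ hC, mul_comm]
    exact hA y
  rw [bijective_iff_dense_range_and_antilipschitz]
  exact ⟨Submodule.topologicalClosure_eq_top_iff.mpr hrange, _, hanti⟩

end ContinuousLinearMap

section RieszFlip

variable {X Y : Type*} [NormedAddCommGroup X] [InnerProductSpace ℝ X] [CompleteSpace X]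
  [NormedAddCommGroup Y] [NormedSpace ℝ Y]

noncomputable def rieszFlip (b : X →L[ℝ] Y →L[ℝ] ℝ) : Y →L[ℝ] X :=
  (InnerProductSpace.toDual ℝ X).symm.toContinuousLinearEquiv.toContinuousLinearMap.comp b.flip

theorem inner_rieszFlip_apply (b : X →L[ℝ] Y →L[ℝ] ℝ) (y : Y) (x : X) :
    ⟪rieszFlip b y, x⟫ = b x y :=
  InnerProductSpace.toDual_symm_apply

theorem norm_rieszFlip_apply (b : X →L[ℝ] Y →L[ℝ] ℝ) (y : Y) :
    ‖rieszFlip b y‖ = ‖b.flip y‖ :=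
  (InnerProductSpace.toDual ℝ X).symm.norm_map _

theorem mem_orthogonal_range_rieszFlip_iff (b : X →L[ℝ] Y →L[ℝ] ℝ) (w : X) :
    w ∈ (rieszFlip b).rangeᗮ ↔ ∀ y, b w y = 0 := by
  simp only [Submodule.mem_orthogonal, LinearMap.mem_range, forall_exists_index,
    forall_apply_eq_imp_iff, ContinuousLinearMap.coe_coe, inner_rieszFlip_apply]

theorem exists_forall_apply_eq_of_bijective_rieszFlip (b : X →L[ℝ] Y →L[ℝ] ℝ)
    [CompleteSpace Y] (hA : Function.Bijective (rieszFlip b)) (l : Y →L[ℝ] ℝ) :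
    ∃ x, ∀ y, b x y = l y := by
  let e := ContinuousLinearEquiv.ofBijective (rieszFlip b)
    (LinearMap.ker_eq_bot.mpr hA.1) (LinearMap.range_eq_top.mpr hA.2)
  refine ⟨(InnerProductSpace.toDual ℝ X).symm (l.comp (e.symm : X →L[ℝ] Y)), fun y => ?_⟩
  calc b _ y = ⟪(InnerProductSpace.toDual ℝ X).symm (l.comp (e.symm : X →L[ℝ] Y)), e y⟫ := by
        rw [real_inner_comm]; exact (inner_rieszFlip_apply b y _).symm
    _ = l y := by rw [InnerProductSpace.toDual_symm_apply]; simp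

end RieszFlip

/-- Unique solvability of the (ultraweak) variational formulation. -/
theorem dpg_unique_solvability {X Y : Type*}
    [NormedAddCommGroup X] [InnerProductSpace ℝ X] [CompleteSpace X]
    [NormedAddCommGroup Y] [InnerProductSpace ℝ Y] [CompleteSpace Y]
    (b : X →L[ℝ] Y →L[ℝ] ℝ)
    (hinj : ∀ w : X, (∀ y : Y, b w y = 0) → w = 0)
    (C₁ : ℝ) (hC₁ : 0 < C₁)
    (hlow : ∀ y : Y, C₁ * ‖y‖ ≤ optTestNorm b y)
    (l : Y →L[ℝ] ℝ) :
    ∃! x : X, ∀ y : Y, b x y = l y := by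
  have hbelow : ∀ y, C₁ * ‖y‖ ≤ ‖rieszFlip b y‖ := fun y =>
    (hlow y).trans ((optTestNorm_le_norm_flip b y).trans_eq (norm_rieszFlip_apply b y).symm)
  have horth : (rieszFlip b).rangeᗮ = ⊥ := (Submodule.eq_bot_iff _).mpr
    fun w hw => hinj w ((mem_orthogonal_range_rieszFlip_iff b w).mp hw)
  obtain ⟨x, hx⟩ := exists_forall_apply_eq_of_bijective_rieszFlip b
    ((rieszFlip b).bijective_of_bounded_below_of_orthogonal_range_eq_bot hC₁ hbelow horth) l
  refine ⟨x, hx, fun x' hx' => sub_eq_zero.mp (hinj _ fun y => ?_)⟩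
  rw [map_sub, sub_apply, hx', hx, sub_self]
end

section
/- Suppose condition (INJ) holds. Let X_h be a finite-dimensional subspace of X and let l be a continuous linear functional on Y. Then there exists a unique x_h ∈ X_h such that b(x_h, y) = l(y) for all y ∈ T(X_h). -/
/-!
Since `b x (T z) = ⟪T x, T z⟫`, the discrete equations say that `T xₕ` is the Riesz
representative of `l` restricted to the finite-dimensional, hence complete, subspace `T(Xₕ)`.
That representative exists and is unique, and (INJ) makes `T` injective, so it determines `xₕ`.
-/

open scoped InnerProductSpace RealInnerProductSpace

section

variable {𝕜 E : Type*} [RCLike 𝕜] [NormedAddCommGroup E] [InnerProductSpace 𝕜 E]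

theorem Submodule.existsUnique_mem_inner_eq (K : Submodule 𝕜 E) [CompleteSpace K]
    (f : StrongDual 𝕜 E) : ∃! y, y ∈ K ∧ ∀ k ∈ K, ⟪y, k⟫_𝕜 = f k := by
  set u : K := (InnerProductSpace.toDual 𝕜 K).symm (f.comp K.subtypeL)
  have hu : ∀ k ∈ K, ⟪(u : E), k⟫_𝕜 = f k := fun k hk =>
    InnerProductSpace.toDual_symm_apply (x := (⟨k, hk⟩ : K))
  refine ⟨u, ⟨u.2, hu⟩, ?_⟩
  rintro y ⟨hyK, hy⟩
  have hdiff : y - u ∈ K := K.sub_mem hyK u.2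
  have : ⟪y - u, y - u⟫_𝕜 = 0 := by
    rw [inner_sub_left, hy _ hdiff, hu _ hdiff, sub_self]
  exact sub_eq_zero.mp (inner_self_eq_zero.mp this)

theorem LinearMap.existsUnique_mem_inner_map_eq {X : Type*} [AddCommGroup X] [Module 𝕜 X]
    (T : X →ₗ[𝕜] E) (hT : Function.Injective T) (V : Submodule 𝕜 X)
    [CompleteSpace (V.map T)] (f : StrongDual 𝕜 E) :
    ∃! x, x ∈ V ∧ ∀ z ∈ V, ⟪T x, T z⟫_𝕜 = f (T z) := by
  obtain ⟨_, ⟨hyK, hy⟩, huniq⟩ := (V.map T).existsUnique_mem_inner_eq f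
  obtain ⟨x, hx, rfl⟩ := Submodule.mem_map.mp hyK
  refine ⟨x, ⟨hx, fun z hz => hy _ (Submodule.mem_map_of_mem hz)⟩, ?_⟩
  rintro x' ⟨hx', h'⟩
  refine hT (huniq _ ⟨Submodule.mem_map_of_mem hx', ?_⟩)
  rintro _ ⟨z, hz, rfl⟩
  exact h' z hz

end

theorem dpg_discrete_unique_solvability_general {X Y : Type*}
    [NormedAddCommGroup X] [InnerProductSpace ℝ X]
    [NormedAddCommGroup Y] [InnerProductSpace ℝ Y]
    (b : X →L[ℝ] Y →L[ℝ] ℝ) (T : X →L[ℝ] Y)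
    (hT : ∀ (x : X) (y : Y), ⟪T x, y⟫ = b x y)
    (hinj : ∀ w : X, (∀ y : Y, b w y = 0) → w = 0)
    (Xh : Submodule ℝ X) (hfin : FiniteDimensional ℝ Xh)
    (l : Y →L[ℝ] ℝ) :
    ∃! xh : X, xh ∈ Xh ∧ ∀ z ∈ Xh, b xh (T z) = l (T z) := by
  have hTinj : Function.Injective T := (injective_iff_map_eq_zero T).mpr fun w hw =>
    hinj w fun y => by rw [← hT, hw, inner_zero_left]
  simpa only [← hT, ContinuousLinearMap.coe_coe] using
    (T : X →ₗ[ℝ] Y).existsUnique_mem_inner_map_eq hTinj Xh l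

/-- Unique solvability of the discrete DPG method. -/
theorem dpg_discrete_unique_solvability {X Y : Type*}
    [NormedAddCommGroup X] [InnerProductSpace ℝ X] [CompleteSpace X]
    [NormedAddCommGroup Y] [InnerProductSpace ℝ Y] [CompleteSpace Y]
    (b : X →L[ℝ] Y →L[ℝ] ℝ) (T : X →L[ℝ] Y)
    (hT : ∀ (x : X) (y : Y), ⟪T x, y⟫ = b x y)
    (hinj : ∀ w : X, (∀ y : Y, b w y = 0) → w = 0)
    (Xh : Submodule ℝ X) (hfin : FiniteDimensional ℝ Xh)
    (l : Y →L[ℝ] ℝ) :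
    ∃! xh : X, xh ∈ Xh ∧ ∀ z ∈ Xh, b xh (T z) = l (T z) :=
  dpg_discrete_unique_solvability_general b T hT hinj Xh hfin l
end
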